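/- Let D = (V, Λ) be a digraph and let P be a directed path from u to v with u ≠ v. If d⁻(u) < d⁻(v) − 1, then the orientation obtained by reversing every arc of P has indegree sequence strictly smaller in lexicographic order than that of Λ. -/

import Mathlib

/-- The list of arcs (consecutive pairs) of a list of vertices. -/
def listArcs {V : Type*} (p : List V) : List (V × V) := p.zip p.tail

/-- `p` is a directed path from `u` to `v` in the digraph with arc set `A`. -/
def IsDipath {V : Type*} (A : Finset (V × V)) (u v : V) (p : List V) : Prop :=
  p ≠ [] ∧ p.head? = some u ∧ p.getLast? = some v ∧ p.Nodup ∧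
    p.Chain' (fun a b => (a, b) ∈ A)

/-- Two paths (given as vertex lists) are arc-disjoint. -/
def ArcDisjoint {V : Type*} (p q : List V) : Prop :=
  ∀ e ∈ listArcs p, e ∉ listArcs q

/-- `u` reaches `v`: there is a directed path from `u` to `v`. -/
def Reaches {V : Type*} (A : Finset (V × V)) (u v : V) : Prop :=
  ∃ p, IsDipath A u v p

/-- `u` two-reaches `v`: there are two arc-disjoint directed paths from `u` to `v`. -/
def TwoReaches {V : Type*} (A : Finset (V × V)) (u v : V) : Prop :=
  ∃ p q, IsDipath A u v p ∧ IsDipath A u v q ∧ ArcDisjoint p q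

/-- A digraph is strongly connected if every vertex reaches every other vertex. -/
def StronglyConnected {V : Type*} (A : Finset (V × V)) : Prop :=
  ∀ u v : V, Reaches A u v

/-- The digraph obtained by reversing every arc of the path `p`. -/
def reverseAlong {V : Type*} [DecidableEq V] (A : Finset (V × V)) (p : List V) :
    Finset (V × V) :=
  (A \ (listArcs p).toFinset) ∪ ((listArcs p).map Prod.swap).toFinset

/-- The indegree of a vertex in the digraph with arc set `A`. -/
def inDeg {V : Type*} [DecidableEq V] (A : Finset (V × V)) (v : V) : ℕ :=
  (A.filter (fun e => e.2 = v)).card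

/-- The indegree sequence: the indegrees of all vertices in non-increasing order. -/
def degSeq (V : Type*) [Fintype V] [DecidableEq V] (A : Finset (V × V)) : List ℕ :=
  ((Finset.univ.val.map (inDeg A)).sort (· ≤ ·)).reverse

/-- `A` is an orientation of the simple graph `G`: every edge of `G` gets exactly one
direction, and every arc of `A` comes from an edge of `G`. -/
def IsOrientation {V : Type*} (G : SimpleGraph V) (A : Finset (V × V)) : Prop :=
  (∀ a b : V, G.Adj a b ↔ ((a, b) ∈ A ∨ (b, a) ∈ A)) ∧
    ∀ a b : V, ¬((a, b) ∈ A ∧ (b, a) ∈ A)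

/-- The underlying undirected simple graph of a digraph. -/
def underlying {V : Type*} (A : Finset (V × V)) : SimpleGraph V :=
  SimpleGraph.fromRel (fun a b => (a, b) ∈ A)

/-- `p` is a directed path from `u` to `v` all of whose vertices lie in `S`. -/
def IsDipathIn {V : Type*} (A : Finset (V × V)) (S : Set V) (u v : V) (p : List V) : Prop :=
  IsDipath A u v p ∧ ∀ x ∈ p, x ∈ S

/-- `u` reaches `v` within the induced subdigraph on `S`. -/
def ReachesWithin {V : Type*} (A : Finset (V × V)) (S : Set V) (u v : V) : Prop :=
  ∃ p, IsDipathIn A S u v p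

/-! Reversing the path lowers `d⁻(v)`, raises `d⁻(u)` by at most one (so it stays below the old
`d⁻(v)`) and raises no other indegree. Hence, for the threshold `T = d⁻(v)`, strictly fewer
vertices have indegree at least `T` afterwards and no more have indegree at least `t` for any
`t > T`; for non-increasing sequences such a comparison of counts decides the lexicographic
order. -/

open Finset

theorem List.lex_lt_of_countP_lt_of_countP_le {α : Type*} [LinearOrder α] {l l' : List α}
    (hl : l.Pairwise (· ≥ ·)) {T : α} (hT : l'.countP (T ≤ ·) < l.countP (T ≤ ·))
    (habove : ∀ t, T < t → l'.countP (t ≤ ·) ≤ l.countP (t ≤ ·)) :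
    List.Lex (· < ·) l' l := by
  induction l generalizing l' with
  | nil => simp at hT
  | cons a t ih =>
    cases l' with
    | nil => exact .nil
    | cons a' t' =>
      have hle_a : ∀ x ∈ a :: t, x ≤ a := by
        simpa using fun x hx => List.rel_of_pairwise_cons hl hx
      have hTa : T ≤ a := by
        obtain ⟨x, hx, hTx⟩ := List.countP_pos_iff.mp (Nat.zero_lt_of_lt hT)
        exact (of_decide_eq_true hTx).trans (hle_a x hx)
      have ha' : a' ≤ a := by
        by_contra! h
        have hnone : (a :: t).countP (a' ≤ ·) = 0 :=
          List.countP_eq_zero.mpr fun x hx => by simpa using (hle_a x hx).trans_lt h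
        have hsome : 0 < (a' :: t').countP (a' ≤ ·) :=
          List.countP_pos_iff.mpr ⟨a', List.mem_cons_self, by simp⟩
        have := habove a' (hTa.trans_lt h)
        omega
      rcases ha'.lt_or_eq with h | rfl
      · exact .rel h
      · refine .cons (ih hl.of_cons ?_ fun s hs => ?_)
        · simpa [List.countP_cons] using hT
        · simpa [List.countP_cons] using habove s hs

section SortDesc
variable {ι α : Type*} [LinearOrder α]

lemma countP_reverse_sort_map (s : Finset ι) (f : ι → α) (T : α) :
    ((s.val.map f).sort (· ≤ ·)).reverse.countP (T ≤ ·) = #{w ∈ s | T ≤ f w} := by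
  rw [List.countP_reverse, ← Multiset.coe_countP, Multiset.sort_eq, Multiset.countP_map]
  rfl

theorem lex_reverse_sort_map_lt (s : Finset ι) (f g : ι → α) {v : ι} (hv : v ∈ s)
    (hgv : g v < f v) (hg : ∀ w ∈ s, g w ≤ f w ∨ g w < f v) :
    List.Lex (· < ·) ((s.val.map g).sort (· ≤ ·)).reverse ((s.val.map f).sort (· ≤ ·)).reverse := by
  refine List.lex_lt_of_countP_lt_of_countP_le (T := f v) ?_ ?_ fun t ht => ?_
  · exact List.pairwise_reverse.mpr (Multiset.pairwise_sort _ _)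
  · rw [countP_reverse_sort_map, countP_reverse_sort_map]
    refine card_lt_card (ssubset_iff_of_subset ?_ |>.mpr ⟨v, ?_, ?_⟩)
    · intro w
      simp only [mem_filter]
      rintro ⟨hw, hfw⟩
      exact ⟨hw, hfw.trans ((hg w hw).resolve_right (not_lt.mpr hfw))⟩
    · simp [hv]
    · simp [hgv]
  · rw [countP_reverse_sort_map, countP_reverse_sort_map]
    refine card_le_card fun w => ?_
    simp only [mem_filter]
    rintro ⟨hw, htw⟩
    exact ⟨hw, htw.trans ((hg w hw).resolve_right (by order))⟩

end SortDesc

section Arcs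
variable {V : Type*} {A : Finset (V × V)} {p : List V} {a b c u v w : V}

lemma mem_listArcs_iff {e : V × V} :
    e ∈ listArcs p ↔ ∃ i, ∃ h : i + 1 < p.length, (p[i], p[i + 1]) = e := by
  simp only [listArcs, List.mem_iff_getElem, List.getElem_zip, List.getElem_tail,
    List.length_zip, List.length_tail]
  exact ⟨fun ⟨i, hi, he⟩ => ⟨i, by omega, he⟩, fun ⟨i, hi, he⟩ => ⟨i, by omega, he⟩⟩

lemma mem_of_mem_listArcs (hA : p.IsChain (fun a b => (a, b) ∈ A)) {e : V × V}
    (he : e ∈ listArcs p) : e ∈ A := by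
  obtain ⟨i, hi, rfl⟩ := mem_listArcs_iff.mp he
  exact List.isChain_iff_getElem.mp hA i hi

lemma List.Nodup.eq_of_mem_listArcs (hp : p.Nodup) (hb : (a, b) ∈ listArcs p)
    (hc : (a, c) ∈ listArcs p) : b = c := by
  obtain ⟨i, hi, hib⟩ := mem_listArcs_iff.mp hb
  obtain ⟨j, hj, hjc⟩ := mem_listArcs_iff.mp hc
  simp only [Prod.mk.injEq] at hib hjc
  obtain rfl : i = j := hp.getElem_inj_iff.mp (hib.1.trans hjc.1.symm)
  exact hib.2.symm.trans hjc.2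

lemma List.Nodup.ne_getLast?_of_mem_listArcs (hp : p.Nodup) (hv : p.getLast? = some v)
    (ha : (a, b) ∈ listArcs p) : a ≠ v := by
  obtain ⟨i, hi, hia⟩ := mem_listArcs_iff.mp ha
  rw [List.getLast?_eq_getElem?, List.getElem?_eq_some_iff] at hv
  obtain ⟨hlen, hv⟩ := hv
  rintro rfl
  have := hp.getElem_inj_iff.mp ((Prod.mk.inj hia).1.trans hv.symm)
  omega

lemma exists_mem_listArcs_into_getLast? (hu : p.head? = some u)
    (hv : p.getLast? = some v) (huv : u ≠ v) : ∃ a, (a, v) ∈ listArcs p := by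
  rw [List.head?_eq_getElem?, List.getElem?_eq_some_iff] at hu
  rw [List.getLast?_eq_getElem?, List.getElem?_eq_some_iff] at hv
  obtain ⟨h0, rfl⟩ := hu
  obtain ⟨hlen, rfl⟩ := hv
  have hlen2 : p.length - 2 + 1 < p.length := by
    by_contra
    exact huv (by congr 1; omega)
  refine ⟨p[p.length - 2], mem_listArcs_iff.mpr ⟨p.length - 2, hlen2, ?_⟩⟩
  congr 2
  omega

lemma exists_mem_listArcs_into_of_ne_head? (hu : p.head? = some u) (hw : (w, b) ∈ listArcs p)
    (hwu : w ≠ u) : ∃ a, (a, w) ∈ listArcs p := by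
  obtain ⟨i, hi, hiw⟩ := mem_listArcs_iff.mp hw
  rw [List.head?_eq_getElem?, List.getElem?_eq_some_iff] at hu
  obtain ⟨h0, rfl⟩ := hu
  obtain ⟨rfl, -⟩ := Prod.mk.inj hiw
  have hi0 : i ≠ 0 := by rintro rfl; exact hwu rfl
  refine ⟨p[i - 1], mem_listArcs_iff.mpr ⟨i - 1, by omega, ?_⟩⟩
  congr 2
  omega

end Arcs

section Degrees
variable {V : Type*} [DecidableEq V] {A : Finset (V × V)} {p : List V} {u v w : V}

/-- Only an inequality: a reversed path arc may already be an arc of `A`. -/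
lemma inDeg_reverseAlong_add_card_le (hA : ∀ e ∈ listArcs p, e ∈ A) (w : V) :
    inDeg (reverseAlong A p) w + #{e ∈ (listArcs p).toFinset | e.2 = w} ≤
      inDeg A w + #{e ∈ (listArcs p).toFinset | e.1 = w} := by
  set arcsIn := {e ∈ (listArcs p).toFinset | e.2 = w}
  set arcsOut := {e ∈ (listArcs p).toFinset | e.1 = w}
  have hsub : {e ∈ reverseAlong A p | e.2 = w} ⊆
      ({e ∈ A | e.2 = w} \ arcsIn) ∪ arcsOut.image Prod.swap := by
    intro e
    simp only [reverseAlong, arcsIn, arcsOut, mem_filter, mem_union, mem_sdiff, mem_image,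
      List.mem_toFinset, List.mem_map]
    aesop
  have hIn : arcsIn ⊆ {e ∈ A | e.2 = w} := by
    intro e
    simp only [arcsIn, mem_filter, List.mem_toFinset]
    exact fun ⟨he, hew⟩ => ⟨hA e he, hew⟩
  have := card_le_card hIn
  calc inDeg (reverseAlong A p) w + #arcsIn
      ≤ #({e ∈ A | e.2 = w} \ arcsIn) + #(arcsOut.image Prod.swap) + #arcsIn := by
        gcongr
        exact (card_le_card hsub).trans (card_union_le _ _)
    _ ≤ inDeg A w + #arcsOut := by
        rw [card_sdiff_of_subset hIn, inDeg]
        have := card_image_le (s := arcsOut) (f := Prod.swap)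
        omega

lemma List.Nodup.card_listArcs_fst_le_one (hp : p.Nodup) (w : V) :
    #{e ∈ (listArcs p).toFinset | e.1 = w} ≤ 1 := by
  refine card_le_one.mpr ?_
  rintro ⟨a, b⟩ he ⟨a', b'⟩ he'
  simp only [Finset.mem_filter, List.mem_toFinset] at he he'
  obtain ⟨he, rfl⟩ := he
  obtain ⟨he', rfl⟩ := he'
  rw [hp.eq_of_mem_listArcs he he']

lemma IsDipath.inDeg_reverseAlong_head_le (hp : IsDipath A u v p) :
    inDeg (reverseAlong A p) u ≤ inDeg A u + 1 := by
  obtain ⟨-, -, -, hnd, hch⟩ := hp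
  have := inDeg_reverseAlong_add_card_le (fun _ => mem_of_mem_listArcs hch) u
  have := hnd.card_listArcs_fst_le_one u
  omega

lemma IsDipath.inDeg_reverseAlong_le (hp : IsDipath A u v p) (hw : w ≠ u) :
    inDeg (reverseAlong A p) w ≤ inDeg A w := by
  obtain ⟨-, hu, -, hnd, hch⟩ := hp
  have := inDeg_reverseAlong_add_card_le (fun _ => mem_of_mem_listArcs hch) w
  have := hnd.card_listArcs_fst_le_one w
  suffices #{e ∈ (listArcs p).toFinset | e.1 = w} ≤ #{e ∈ (listArcs p).toFinset | e.2 = w} by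
    omega
  rcases Nat.eq_zero_or_pos #{e ∈ (listArcs p).toFinset | e.1 = w} with h | h
  · omega
  obtain ⟨⟨a, b⟩, hab⟩ := card_pos.mp h
  simp only [mem_filter, List.mem_toFinset] at hab
  obtain ⟨hab, rfl⟩ := hab
  obtain ⟨c, hc⟩ := exists_mem_listArcs_into_of_ne_head? hu hab hw
  have : 0 < #{e ∈ (listArcs p).toFinset | e.2 = a} :=
    card_pos.mpr ⟨(c, a), by simpa using hc⟩
  omega

lemma IsDipath.inDeg_reverseAlong_lt (hp : IsDipath A u v p) (huv : u ≠ v) :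
    inDeg (reverseAlong A p) v < inDeg A v := by
  obtain ⟨-, hu, hv, hnd, hch⟩ := hp
  have := inDeg_reverseAlong_add_card_le (fun _ => mem_of_mem_listArcs hch) v
  have hout : #{e ∈ (listArcs p).toFinset | e.1 = v} = 0 := by
    refine card_eq_zero.mpr (filter_eq_empty_iff.mpr fun ⟨a, b⟩ hab => ?_)
    exact hnd.ne_getLast?_of_mem_listArcs hv (List.mem_toFinset.mp hab)
  obtain ⟨a, ha⟩ := exists_mem_listArcs_into_getLast? hu hv huv
  have : 0 < #{e ∈ (listArcs p).toFinset | e.2 = v} :=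
    card_pos.mpr ⟨(a, v), by simpa using ha⟩
  omega

end Degrees

/-- Reversing a directed path from `u` to `v` with `d⁻(u) < d⁻(v) - 1` strictly decreases
the indegree sequence in lexicographic order. -/
theorem stmt_10 {V : Type*} [Fintype V] [DecidableEq V] (A : Finset (V × V))
    (u v : V) (huv : u ≠ v) (p : List V) (hp : IsDipath A u v p)
    (hdeg : inDeg A u + 1 < inDeg A v) :
    List.Lex (· < ·) (degSeq V (reverseAlong A p)) (degSeq V A) := by
  refine lex_reverse_sort_map_lt univ (inDeg A) (inDeg (reverseAlong A p)) (mem_univ v)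
    (hp.inDeg_reverseAlong_lt huv) fun w _ => ?_
  by_cases hwu : w = u
  · subst hwu
    exact .inr (hp.inDeg_reverseAlong_head_le.trans_lt hdeg)
  · exact .inl (hp.inDeg_reverseAlong_le hwu)
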